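/- Let Γ act by isometries on a metric space X with basepoint o₀ = g₀·o for a fixed isometry g₀ (with some o ∈ X), and let F be the Dirichlet domain of Γ with respect to o₀. Set a(x) = exp(dist(o,x)), a(g) = exp(dist(o,g·o)), and a₃ := min(1, a(g₀)⁻²). Then for all g ∈ Γ and x ∈ F one has a(g·x) ≥ a₃ · max(a(g)·a(x)⁻¹, a(x)). -/
import Mathlib


/-- Lemma 3.6 (geim): for `x` in the Dirichlet domain of `Γ` with respect to
`g₀ • o` one has `a (g • x) ≥ a₃ * max (a g / a x) (a x)` where
`a₃ = min 1 (a g₀)⁻²`. -/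
theorem stmt_2 {Γ X : Type*} [Group Γ] [MetricSpace X] [MulAction Γ X]
    (hiso : ∀ (g : Γ) (x y : X), dist (g • x) (g • y) = dist x y)
    (o : X) (g₀ : X ≃ᵢ X) (g : Γ) (x : X)
    (hx : ∀ h : Γ, dist (g₀ o) x ≤ dist (g₀ o) (h • x)) :
    min 1 ((Real.exp (dist o (g₀ o)))^2)⁻¹ *
      max (Real.exp (dist o (g • o)) / Real.exp (dist o x)) (Real.exp (dist o x))
      ≤ Real.exp (dist o (g • x)) := by
  set A := dist o (g₀ o) with hA
  set r := dist o x with hr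
  set B := dist o (g • o) with hB
  set D := dist o (g • x) with hD
  have hAnn : 0 ≤ A := dist_nonneg
  have h1 : r ≤ D + 2 * A := by
    have h2 := hx g
    have h3 : dist o x ≤ dist o (g₀ o) + dist (g₀ o) x := dist_triangle _ _ _
    have h4 : dist (g₀ o) (g • x) ≤ dist (g₀ o) o + dist o (g • x) := dist_triangle _ _ _
    rw [dist_comm (g₀ o) o] at h4
    simp only [← hA, ← hr, ← hD] at *
    linarith
  have h2 : B ≤ D + r := by
    have h := dist_triangle o (g • x) (g • o)
    rw [hiso g x o, dist_comm x o] at h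
    simpa [← hB, ← hD, ← hr] using h
  have hmin : min 1 ((Real.exp A)^2)⁻¹ = Real.exp (-(2 * A)) := by
    rw [← Real.exp_nat_mul, Nat.cast_ofNat, ← Real.exp_neg]
    exact min_eq_right (Real.exp_le_one_iff.mpr (by linarith))
  have hmax : max (Real.exp B / Real.exp r) (Real.exp r)
      = Real.exp (max (B - r) r) := by
    rw [← Real.exp_sub]
    exact (Real.exp_monotone.map_max).symm
  rw [hmin, hmax, ← Real.exp_add, Real.exp_le_exp]
  have := max_le (by linarith : B - r ≤ D + 2 * A) (by linarith : r ≤ D + 2 * A)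
  linarith [this]
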